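/- arXiv:1505.03127 — 3 statements merged into one kernel-verified Lean document; each statement's English description precedes it below -/
import Mathlib

section
/- Let G be a group, V a finite-dimensional complex vector space, and ρ : G → GL(V) a representation. Suppose (v_i)_{i∈ι} is a basis of V and χ : ι → (G → ℂ) is a family of functions that are pairwise distinct, such that ρ(g)(v_i) = χ_i(g) · v_i for every g ∈ G and i ∈ ι. Then every ρ-invariant linear subspace U of V (i.e., ρ(g)(U) ⊆ U for all g ∈ G) is equal to the linear span of the set {v_i : i ∈ ι, v_i ∈ U}. -/
/-! If `u ∈ U` has a nonzero `i`-th coordinate and some other coordinate `j`, choose `g` with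
`χ i g ≠ χ j g`: then `ρ g u - χ j g • u ∈ U` still has a nonzero `i`-th coordinate but has lost
the `j`-th one. Induction on the support leaves a nonzero multiple of `v i` in `U`, and `U` is
spanned by the basis vectors occurring in the coordinates of its elements. -/

namespace Module.Basis

variable {K V ι : Type*} [Field K] [AddCommGroup V] [Module K V] (b : Basis ι K V)

theorem repr_apply_map_of_apply_eq_smul {f : V →ₗ[K] V} {c : ι → K}
    (hf : ∀ i, f (b i) = c i • b i) (x : V) (i : ι) :
    b.repr (f x) i = c i * b.repr x i := by
  have hcoord : (b.coord i).comp f = c i • b.coord i := b.ext fun j => by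
    by_cases hij : i = j
    · subst hij; simp [hf]
    · simp [hf, Finsupp.single_eq_of_ne hij]
  simpa using LinearMap.congr_fun hcoord x

theorem mem_of_repr_support_subset_singleton {U : Submodule K V} {u : V} (hu : u ∈ U) {i : ι}
    (hi : b.repr u i ≠ 0) (hsupp : (b.repr u).support ⊆ {i}) : b i ∈ U := by
  set c := b.repr u i
  have hu_eq : u = c • b i := by
    rw [← b.repr_symm_single, ← Finsupp.support_subset_singleton.mp hsupp,
      LinearEquiv.symm_apply_apply]
  have hbi : b i = c⁻¹ • u := by rw [hu_eq, smul_smul, inv_mul_cancel₀ hi, one_smul]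
  exact hbi ▸ U.smul_mem _ hu

theorem mem_of_repr_ne_zero_of_invariant {G : Type*} (f : G → V →ₗ[K] V) (χ : ι → G → K)
    (hχ : Function.Injective χ) (hf : ∀ g i, f g (b i) = χ i g • b i)
    {U : Submodule K V} (hU : ∀ g, ∀ u ∈ U, f g u ∈ U) {u : V} (hu : u ∈ U) {i : ι}
    (hi : b.repr u i ≠ 0) : b i ∈ U := by
  classical
  induction hs : (b.repr u).support using Finset.strongInduction generalizing u with
  | H s ih =>
  by_cases hsupp : (b.repr u).support ⊆ {i}
  · exact b.mem_of_repr_support_subset_singleton hu hi hsupp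
  obtain ⟨j, hj, hji⟩ : ∃ j ∈ (b.repr u).support, j ≠ i := by
    simpa using Finset.not_subset.mp hsupp
  obtain ⟨g, hg⟩ : ∃ g, χ i g ≠ χ j g := Function.ne_iff.mp (hχ.ne hji.symm)
  set w := f g u - χ j g • u
  have hw : ∀ k, b.repr w k = (χ k g - χ j g) * b.repr u k := fun k => by
    simp [w, b.repr_apply_map_of_apply_eq_smul (hf g), sub_mul]
  have hw_supp : (b.repr w).support ⊆ (b.repr u).support.erase j := fun k hk => by
    rw [Finsupp.mem_support_iff, hw] at hk
    exact Finset.mem_erase.mpr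
      ⟨by rintro rfl; simp at hk, Finsupp.mem_support_iff.mpr (right_ne_zero_of_mul hk)⟩
  refine ih _ (hs ▸ hw_supp.trans_ssubset (Finset.erase_ssubset hj))
    (U.sub_mem (hU g u hu) (U.smul_mem (χ j g) hu)) ?_ rfl
  rw [hw]
  exact mul_ne_zero (sub_ne_zero.mpr hg) hi

end Module.Basis

theorem invariant_subspace_spanned_by_weight_vectors_general
    {G : Type*} [Group G] {V : Type*} [AddCommGroup V] [Module ℂ V]
    (ρ : G →* (V ≃ₗ[ℂ] V))
    {ι : Type*} (v : Module.Basis ι ℂ V)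
    (χ : ι → G → ℂ) (hχ : Function.Injective χ)
    (hv : ∀ (g : G) (i : ι), ρ g (v i) = χ i g • v i)
    (U : Submodule ℂ V) (hU : ∀ g : G, ∀ u ∈ U, ρ g u ∈ U) :
    U = Submodule.span ℂ {x : V | x ∈ Set.range v ∧ x ∈ U} := by
  refine le_antisymm (fun u hu => ?_) (Submodule.span_le.mpr fun x hx => hx.2)
  refine Submodule.span_mono ?_ (v.mem_span_repr_support u)
  rintro _ ⟨i, hi, rfl⟩
  exact ⟨⟨i, rfl⟩, v.mem_of_repr_ne_zero_of_invariant (fun g => (ρ g : V →ₗ[ℂ] V)) χ hχ hv hU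
    hu (Finsupp.mem_support_iff.mp hi)⟩

/-- If a representation `ρ` of a group `G` on a finite-dimensional complex
vector space `V` acts on each member of a basis `(v i)` by a character `χ i`, and the
characters are pairwise distinct, then every `ρ`-invariant subspace `U` of `V` is
spanned by the basis vectors it contains. -/
theorem invariant_subspace_spanned_by_weight_vectors
    {G : Type*} [Group G] {V : Type*} [AddCommGroup V] [Module ℂ V]
    [FiniteDimensional ℂ V]
    (ρ : G →* (V ≃ₗ[ℂ] V))
    {ι : Type*} (v : Module.Basis ι ℂ V)
    (χ : ι → G → ℂ) (hχ : Function.Injective χ)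
    (hv : ∀ (g : G) (i : ι), ρ g (v i) = χ i g • v i)
    (U : Submodule ℂ V) (hU : ∀ g : G, ∀ u ∈ U, ρ g u ∈ U) :
    U = Submodule.span ℂ {x : V | x ∈ Set.range v ∧ x ∈ U} :=
  invariant_subspace_spanned_by_weight_vectors_general ρ v χ hχ hv U hU
end

section
/- Let G be a group, V a finite-dimensional complex vector space, and ρ : G → GL(V) a representation. Suppose (v_i)_{i∈ι} is a basis of V and χ : ι → (G → ℂ) is a family of functions that are pairwise distinct, such that ρ(g)(v_i) = χ_i(g) · v_i for every g ∈ G and i ∈ ι. Let U₁ and U₂ be ρ-invariant subspaces of V of codimension 1, and suppose there is a single function μ : G → ℂ such that for each j ∈ {1,2} and every g ∈ G, the linear map induced by ρ(g) on the quotient V/U_j is multiplication by μ(g). Then U₁ = U₂. -/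
/-! The eigenvalue of `ρ g` on a quotient line `V ⧸ U` must be one of the characters `χ i`:
every basis vector whose character differs from `μ` dies in `V ⧸ U`, and they cannot all die
since `U ≠ ⊤`. As the characters are distinct, exactly one `v i₀` survives, so `U` contains
the hyperplane `ker (v.coord i₀)` spanned by the other basis vectors, and hence equals it. -/

theorem Submodule.mem_of_mk_smul_eq_smul_mk {K V : Type*} [DivisionRing K] [AddCommGroup V]
    [Module K V] {U : Submodule K V} {a b : K} {x : V} (hab : a ≠ b)
    (h : (Submodule.Quotient.mk (a • x) : V ⧸ U) = b • Submodule.Quotient.mk x) :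
    x ∈ U := by
  rw [Submodule.Quotient.mk_smul, ← sub_eq_zero, ← sub_smul, smul_eq_zero] at h
  exact (Submodule.Quotient.mk_eq_zero U).1 (h.resolve_left (sub_ne_zero.2 hab))

namespace Module.Basis

variable {ι R V : Type*}

theorem exists_notMem_of_ne_top [Semiring R] [AddCommMonoid V] [Module R V]
    (v : Basis ι R V) {U : Submodule R V} (hU : U ≠ ⊤) : ∃ i, v i ∉ U := by
  by_contra! h
  refine hU (eq_top_iff.2 ?_)
  rw [← v.span_eq, Submodule.span_le]
  exact Set.range_subset_iff.2 h

theorem ker_coord_le [Semiring R] [AddCommMonoid V] [Module R V] (v : Basis ι R V)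
    {U : Submodule R V} {i₀ : ι} (h : ∀ i, i ≠ i₀ → v i ∈ U) :
    LinearMap.ker (v.coord i₀) ≤ U := by
  intro x hx
  have hx' : x ∈ Submodule.span R (v '' {i | i ≠ i₀}) := by
    refine v.mem_span_image.2 fun i hi hii₀ => ?_
    subst hii₀
    exact Finsupp.mem_support_iff.1 hi hx
  refine Submodule.span_le.2 ?_ hx'
  rintro _ ⟨i, hi, rfl⟩
  exact h i hi

theorem isCoatom_ker_coord [DivisionRing R] [AddCommGroup V] [Module R V] (v : Basis ι R V)
    (i₀ : ι) : IsCoatom (LinearMap.ker (v.coord i₀)) :=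
  LinearMap.isCoatom_ker_of_surjective fun c => ⟨c • v i₀, by simp⟩

theorem eq_ker_coord_of_ne_top [DivisionRing R] [AddCommGroup V] [Module R V]
    (v : Basis ι R V) {U : Submodule R V} (hU : U ≠ ⊤) {i₀ : ι}
    (h : ∀ i, i ≠ i₀ → v i ∈ U) : U = LinearMap.ker (v.coord i₀) :=
  ((v.isCoatom_ker_coord i₀).le_iff_eq hU).1 (v.ker_coord_le h)

end Module.Basis

theorem Submodule.ne_top_of_finrank_quotient_pos {R M : Type*} [Ring R] [Nontrivial R]
    [AddCommGroup M] [Module R M] {U : Submodule R M} (h : 0 < Module.finrank R (M ⧸ U)) :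
    U ≠ ⊤ :=
  Submodule.Quotient.nontrivial_iff.1 (Module.nontrivial_of_finrank_pos h)

section QuotientCharacter

variable {G K V ι : Type*} [Monoid G] [DivisionRing K] [AddCommGroup V] [Module K V]
  (ρ : G →* (V ≃ₗ[K] V)) (v : Module.Basis ι K V) (χ : ι → G → K)
  (hv : ∀ (g : G) (i : ι), ρ g (v i) = χ i g • v i)
  {U : Submodule K V} {μ : G → K}

include hv in
theorem basis_mem_of_character_ne_quotient_character
    (hμ : ∀ (g : G) (x : V),
      (Submodule.Quotient.mk (ρ g x) : V ⧸ U) = μ g • (Submodule.Quotient.mk x : V ⧸ U))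
    {i : ι} (hi : χ i ≠ μ) : v i ∈ U := by
  obtain ⟨g, hg⟩ := Function.ne_iff.1 hi
  exact Submodule.mem_of_mk_smul_eq_smul_mk hg (hv g i ▸ hμ g (v i))

include hv in
theorem exists_character_eq_quotient_character (hU : U ≠ ⊤)
    (hμ : ∀ (g : G) (x : V),
      (Submodule.Quotient.mk (ρ g x) : V ⧸ U) = μ g • (Submodule.Quotient.mk x : V ⧸ U)) :
    ∃ i, χ i = μ := by
  obtain ⟨i, hi⟩ := v.exists_notMem_of_ne_top hU
  by_contra! h
  exact hi (basis_mem_of_character_ne_quotient_character ρ v χ hv hμ (h i))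

include hv in
theorem eq_ker_coord_of_character_eq_quotient_character (hχ : Function.Injective χ)
    (hU : U ≠ ⊤)
    (hμ : ∀ (g : G) (x : V),
      (Submodule.Quotient.mk (ρ g x) : V ⧸ U) = μ g • (Submodule.Quotient.mk x : V ⧸ U))
    {i₀ : ι} (hi₀ : χ i₀ = μ) : U = LinearMap.ker (v.coord i₀) :=
  v.eq_ker_coord_of_ne_top hU fun _ hi =>
    basis_mem_of_character_ne_quotient_character ρ v χ hv hμ fun h =>
      hi (hχ (h.trans hi₀.symm))

end QuotientCharacter

theorem corank_one_invariant_subspaces_with_same_character_are_equal_general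
    {G : Type*} [Group G] {V : Type*} [AddCommGroup V] [Module ℂ V]
    (ρ : G →* (V ≃ₗ[ℂ] V))
    {ι : Type*} (v : Module.Basis ι ℂ V)
    (χ : ι → G → ℂ) (hχ : Function.Injective χ)
    (hv : ∀ (g : G) (i : ι), ρ g (v i) = χ i g • v i)
    (U₁ U₂ : Submodule ℂ V)
    (hcod₁ : Module.finrank ℂ (V ⧸ U₁) = 1)
    (hcod₂ : Module.finrank ℂ (V ⧸ U₂) = 1)
    (μ : G → ℂ)
    (hμ₁ : ∀ (g : G) (x : V),
      (Submodule.Quotient.mk (ρ g x) : V ⧸ U₁) = μ g • (Submodule.Quotient.mk x : V ⧸ U₁))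
    (hμ₂ : ∀ (g : G) (x : V),
      (Submodule.Quotient.mk (ρ g x) : V ⧸ U₂) = μ g • (Submodule.Quotient.mk x : V ⧸ U₂)) :
    U₁ = U₂ := by
  have hU₁ : U₁ ≠ ⊤ := Submodule.ne_top_of_finrank_quotient_pos (by omega)
  have hU₂ : U₂ ≠ ⊤ := Submodule.ne_top_of_finrank_quotient_pos (by omega)
  obtain ⟨i₀, hi₀⟩ := exists_character_eq_quotient_character ρ v χ hv hU₁ hμ₁
  rw [eq_ker_coord_of_character_eq_quotient_character ρ v χ hv hχ hU₁ hμ₁ hi₀,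
    eq_ker_coord_of_character_eq_quotient_character ρ v χ hv hχ hU₂ hμ₂ hi₀]

/-- Let `ρ` be a representation of a group `G` on a finite-dimensional
complex vector space `V` acting on each member of a basis `(v i)` by pairwise distinct
characters `χ i`. If `U₁`, `U₂` are `ρ`-invariant subspaces of codimension 1 such that
for a single function `μ : G → ℂ` the map induced by `ρ g` on each quotient `V ⧸ Uⱼ` is
multiplication by `μ g`, then `U₁ = U₂`. -/
theorem corank_one_invariant_subspaces_with_same_character_are_equal
    {G : Type*} [Group G] {V : Type*} [AddCommGroup V] [Module ℂ V]
    [FiniteDimensional ℂ V]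
    (ρ : G →* (V ≃ₗ[ℂ] V))
    {ι : Type*} (v : Module.Basis ι ℂ V)
    (χ : ι → G → ℂ) (hχ : Function.Injective χ)
    (hv : ∀ (g : G) (i : ι), ρ g (v i) = χ i g • v i)
    (U₁ U₂ : Submodule ℂ V)
    (hU₁ : ∀ g : G, ∀ u ∈ U₁, ρ g u ∈ U₁)
    (hU₂ : ∀ g : G, ∀ u ∈ U₂, ρ g u ∈ U₂)
    (hcod₁ : Module.finrank ℂ (V ⧸ U₁) = 1)
    (hcod₂ : Module.finrank ℂ (V ⧸ U₂) = 1)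
    (μ : G → ℂ)
    (hμ₁ : ∀ (g : G) (x : V),
      (Submodule.Quotient.mk (ρ g x) : V ⧸ U₁) = μ g • (Submodule.Quotient.mk x : V ⧸ U₁))
    (hμ₂ : ∀ (g : G) (x : V),
      (Submodule.Quotient.mk (ρ g x) : V ⧸ U₂) = μ g • (Submodule.Quotient.mk x : V ⧸ U₂)) :
    U₁ = U₂ :=
  corank_one_invariant_subspaces_with_same_character_are_equal_general ρ v χ hχ hv U₁ U₂ hcod₁ hcod₂
    μ hμ₁ hμ₂
end

section
/- Let Φ be a reduced crystallographic root system with base Π in a finite-dimensional real inner product space E, let S ⊆ Π, let Δ⁺ be the set of positive roots, and let Δ_S⁺ be the set of positive roots that are ℤ-linear combinations of elements of S. Then μ_S = Σ_{γ ∈ Δ⁺\Δ_S⁺} γ is dominant: ⟪μ_S, β⟫ ≥ 0 for every β ∈ Π. -/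
/-!
For a simple root `β`, the reflection `s_β` permutes the positive roots other than `β`: such a
root keeps a positive coefficient at some simple root `α ≠ β`, so all its coefficients stay
nonnegative. Hence `⟪∑_{Δ⁺} γ, β⟫ = ⟪β, β⟫`. If `β ∈ S`, the crystallographic condition shows
that `s_β` also permutes `Δ_S⁺ \ {β}`, and the two contributions cancel. If `β ∉ S`, every root
of `Δ_S⁺` is a nonnegative combination of simple roots `α ≠ β`, and `⟪α, β⟫ ≤ 0` for those
because `s_β α = α - tβ` cannot have coefficients of both signs.
-/

open scoped RealInnerProductSpace

section Reflection

variable {E : Type*} [NormedAddCommGroup E] [InnerProductSpace ℝ E]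

noncomputable def rootReflection (β v : E) : E := v - (2 * ⟪v, β⟫ / ⟪β, β⟫) • β

variable {β : E}

lemma inner_rootReflection_left (hβ : β ≠ 0) (v : E) :
    ⟪rootReflection β v, β⟫ = -⟪v, β⟫ := by
  have : ⟪β, β⟫ ≠ 0 := inner_self_ne_zero.mpr hβ
  rw [rootReflection, inner_sub_left, real_inner_smul_left]
  field_simp
  ring

lemma rootReflection_rootReflection (hβ : β ≠ 0) (v : E) :
    rootReflection β (rootReflection β v) = v := by
  conv_lhs => rw [rootReflection, inner_rootReflection_left hβ, rootReflection]
  rw [mul_neg, neg_div, neg_smul, sub_neg_eq_add, sub_add_cancel]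

lemma inner_sum_eq_zero_of_mapsTo (hβ : β ≠ 0) {T : Finset E}
    (hT : ∀ v ∈ T, rootReflection β v ∈ T) : ⟪∑ v ∈ T, v, β⟫ = 0 := by
  have hswap : ∑ v ∈ T, ⟪rootReflection β v, β⟫ = ∑ v ∈ T, ⟪v, β⟫ :=
    Finset.sum_nbij' (rootReflection β) (rootReflection β) hT hT
      (fun v _ => rootReflection_rootReflection hβ v)
      (fun v _ => rootReflection_rootReflection hβ v) (fun _ _ => rfl)
  simp only [inner_rootReflection_left hβ, Finset.sum_neg_distrib] at hswap
  rw [sum_inner]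
  linarith

lemma inner_sum_eq_inner_self_of_mapsTo_erase [DecidableEq E] (hβ : β ≠ 0) {T : Finset E}
    (hβT : β ∈ T) (hT : ∀ v ∈ T.erase β, rootReflection β v ∈ T.erase β) :
    ⟪∑ v ∈ T, v, β⟫ = ⟪β, β⟫ := by
  rw [← Finset.add_sum_erase T _ hβT, inner_add_left, inner_sum_eq_zero_of_mapsTo hβ hT,
    add_zero]

end Reflection

section Coefficients

variable {E : Type*} [AddCommGroup E] [Module ℝ E] {Pi : Finset E}

lemma Finset.sum_smul_sub_smul [DecidableEq E] {β : E} (hβ : β ∈ Pi) (a : E → ℝ) (t : ℝ) :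
    ∑ x ∈ Pi, a x • x - t • β = ∑ x ∈ Pi, (a x - if x = β then t else 0) • x := by
  simp [sub_smul, Finset.sum_sub_distrib, ite_smul, hβ]

def HasSignedIntCoeffs (Pi : Finset E) (γ : E) : Prop :=
  ∃ c : E → ℤ, γ = ∑ β ∈ Pi, (c β : ℝ) • β ∧ ((∀ β ∈ Pi, 0 ≤ c β) ∨ (∀ β ∈ Pi, c β ≤ 0))

variable {γ : E} {a : E → ℝ}

lemma HasSignedIntCoeffs.nonneg_or_nonpos (hPi : LinearIndepOn ℝ id (Pi : Set E))
    (hγ : HasSignedIntCoeffs Pi γ) (ha : γ = ∑ x ∈ Pi, a x • x) :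
    (∀ x ∈ Pi, 0 ≤ a x) ∨ (∀ x ∈ Pi, a x ≤ 0) := by
  obtain ⟨c, hc, hsign⟩ := hγ
  have hca := linearIndepOn_finset_iffₛ.mp hPi (fun x => (c x : ℝ)) a (hc.symm.trans ha)
  refine hsign.imp (fun h x hx => ?_) (fun h x hx => ?_) <;> rw [← hca x hx]
  · exact_mod_cast h x hx
  · exact_mod_cast h x hx

lemma HasSignedIntCoeffs.exists_nat_coeffs (hPi : LinearIndepOn ℝ id (Pi : Set E))
    (hγ : HasSignedIntCoeffs Pi γ) (ha : γ = ∑ x ∈ Pi, a x • x) (ha₀ : ∀ x ∈ Pi, 0 ≤ a x) :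
    ∃ c : E → ℕ, γ = ∑ x ∈ Pi, (c x : ℝ) • x := by
  obtain ⟨c, hc, -⟩ := hγ
  have hca := linearIndepOn_finset_iffₛ.mp hPi (fun x => (c x : ℝ)) a (hc.symm.trans ha)
  refine ⟨fun x => (c x).toNat, hc.trans (Finset.sum_congr rfl fun x hx => ?_)⟩
  have : 0 ≤ c x := by exact_mod_cast (hca x hx).symm ▸ ha₀ x hx
  rw [← Int.cast_natCast, Int.toNat_of_nonneg this]

lemma exists_int_coeffs_sub_smul [DecidableEq E] {S : Finset E} {β v : E} (hβ : β ∈ S)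
    {c : E → ℤ} (hc : v = ∑ x ∈ S, (c x : ℝ) • x) (k : ℤ) :
    ∃ d : E → ℤ, v - (k : ℝ) • β = ∑ x ∈ S, (d x : ℝ) • x :=
  ⟨fun x => c x - if x = β then k else 0, by
    rw [hc, Finset.sum_smul_sub_smul hβ]
    push_cast [apply_ite (Int.cast : ℤ → ℝ), Int.cast_zero]
    rfl⟩

end Coefficients

section Base

variable {E : Type*} [NormedAddCommGroup E] [InnerProductSpace ℝ E] {Pi : Finset E}

lemma inner_nonpos_of_ne [DecidableEq E] (hPi : LinearIndepOn ℝ id (Pi : Set E)) {α β : E}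
    (hα : α ∈ Pi) (hβ : β ∈ Pi) (hαβ : α ≠ β)
    (hs : HasSignedIntCoeffs Pi (rootReflection β α)) : ⟪α, β⟫ ≤ 0 := by
  by_contra! hpos
  have hββ : 0 < ⟪β, β⟫ := real_inner_self_pos.mpr (hPi.ne_zero hβ)
  have ht : 0 < 2 * ⟪α, β⟫ / ⟪β, β⟫ := by positivity
  have hexp : rootReflection β α = ∑ x ∈ Pi,
      ((if x = α then 1 else 0) - if x = β then 2 * ⟪α, β⟫ / ⟪β, β⟫ else 0) • x := by
    rw [rootReflection, ← Finset.sum_smul_sub_smul hβ]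
    simp [ite_smul, hα]
  rcases hs.nonneg_or_nonpos hPi hexp with h | h
  · have := h β hβ
    simp only [hαβ.symm, if_false, if_true, zero_sub] at this
    linarith
  · have := h α hα
    simp only [hαβ, if_false, if_true, sub_zero] at this
    linarith

lemma exists_coeff_pos_of_ne {Φ : Set E} {β γ : E} (hβ : β ∈ Pi)
    (hred : ∀ t : ℝ, t • β ∈ Φ → t = 1 ∨ t = -1) (hγ : γ ∈ Φ) (hγβ : γ ≠ β)
    {c : E → ℕ} (hc : γ = ∑ x ∈ Pi, (c x : ℝ) • x) : ∃ α ∈ Pi, α ≠ β ∧ 0 < c α := by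
  by_contra! h
  have hγ' : γ = (c β : ℝ) • β := by
    rw [hc, Finset.sum_eq_single_of_mem β hβ fun x hx hxβ => by
      simp [Nat.le_zero.mp (h x hx hxβ)]]
  rcases hred _ (hγ' ▸ hγ) with h1 | h1
  · exact hγβ (by rw [hγ', h1, one_smul])
  · linarith [(c β).cast_nonneg (α := ℝ)]

lemma rootReflection_mem_erase [DecidableEq E] (hPi : LinearIndepOn ℝ id (Pi : Set E))
    {Φ : Set E} {Pos : Finset E} {β : E} (hβ : β ∈ Pi)
    (hred : ∀ t : ℝ, t • β ∈ Φ → t = 1 ∨ t = -1) (hrefl : ∀ γ ∈ Φ, rootReflection β γ ∈ Φ)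
    (hbase : ∀ γ ∈ Φ, HasSignedIntCoeffs Pi γ)
    (hPos : ∀ γ : E, γ ∈ Pos ↔ γ ∈ Φ ∧ ∃ c : E → ℕ, γ = ∑ x ∈ Pi, (c x : ℝ) • x) :
    ∀ γ ∈ Pos.erase β, rootReflection β γ ∈ Pos.erase β := by
  intro γ hγ
  obtain ⟨hγβ, hγPos⟩ := Finset.mem_erase.mp hγ
  obtain ⟨hγΦ, c, hc⟩ := (hPos γ).mp hγPos
  obtain ⟨α, hα, hαβ, hcα⟩ := exists_coeff_pos_of_ne hβ hred hγΦ hγβ hc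
  have hexp : rootReflection β γ =
      ∑ x ∈ Pi, ((c x : ℝ) - if x = β then 2 * ⟪γ, β⟫ / ⟪β, β⟫ else 0) • x := by
    rw [← Finset.sum_smul_sub_smul hβ, ← hc]
    rfl
  have hsγ := hbase _ (hrefl γ hγΦ)
  have hcoeffα : 0 < (c α : ℝ) - if α = β then 2 * ⟪γ, β⟫ / ⟪β, β⟫ else 0 := by
    simpa [hαβ] using hcα
  have hnonneg := (hsγ.nonneg_or_nonpos hPi hexp).resolve_right
    fun h => (h α hα).not_gt hcoeffα
  refine Finset.mem_erase.mpr ⟨fun heq => ?_, (hPos _).mpr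
    ⟨hrefl γ hγΦ, hsγ.exists_nat_coeffs hPi hexp hnonneg⟩⟩
  have hβexp : β = ∑ x ∈ Pi, (if x = β then 1 else 0 : ℝ) • x := by
    simp [ite_smul, hβ]
  have := linearIndepOn_finset_iffₛ.mp hPi _ _ (hexp.symm.trans (heq.trans hβexp)) α hα
  simp only [hαβ, if_false, sub_zero] at this
  exact hcoeffα.ne' (by simpa [hαβ] using this)

lemma rootReflection_mem_erase_of_int_coeffs [DecidableEq E] {S Pos PosS : Finset E} {β : E}
    (hβS : β ∈ S) (hcrys : ∀ γ ∈ PosS, ∃ k : ℤ, 2 * ⟪γ, β⟫ / ⟪β, β⟫ = k)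
    (hPos_erase : ∀ γ ∈ Pos.erase β, rootReflection β γ ∈ Pos.erase β)
    (hPosS : ∀ γ : E, γ ∈ PosS ↔ γ ∈ Pos ∧ ∃ c : E → ℤ, γ = ∑ x ∈ S, (c x : ℝ) • x) :
    ∀ γ ∈ PosS.erase β, rootReflection β γ ∈ PosS.erase β := by
  intro γ hγ
  obtain ⟨hγβ, hγS⟩ := Finset.mem_erase.mp hγ
  obtain ⟨hγPos, c, hc⟩ := (hPosS γ).mp hγS
  obtain ⟨hsβ, hsPos⟩ :=
    Finset.mem_erase.mp (hPos_erase γ (Finset.mem_erase.mpr ⟨hγβ, hγPos⟩))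
  obtain ⟨k, hk⟩ := hcrys γ hγS
  refine Finset.mem_erase.mpr ⟨hsβ, (hPosS _).mpr ⟨hsPos, ?_⟩⟩
  rw [rootReflection, hk]
  exact exists_int_coeffs_sub_smul hβS hc k

lemma inner_nonpos_of_notMem (hPi : LinearIndepOn ℝ id (Pi : Set E)) {S : Finset E}
    (hS : S ⊆ Pi) {β γ : E} (hacute : ∀ α ∈ Pi, α ≠ β → ⟪α, β⟫ ≤ 0) (hβS : β ∉ S)
    {c : E → ℕ} (hc : γ = ∑ x ∈ Pi, (c x : ℝ) • x) {d : E → ℝ} (hd : γ = ∑ x ∈ S, d x • x) :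
    ⟪γ, β⟫ ≤ 0 := by
  classical
  have hd' : γ = ∑ x ∈ Pi, (if x ∈ S then d x else 0) • x := by
    simp only [ite_smul, zero_smul, Finset.sum_ite_mem, Finset.inter_eq_right.mpr hS, hd]
  have hcd := linearIndepOn_finset_iffₛ.mp hPi _ _ (hc.symm.trans hd')
  rw [hc, sum_inner]
  refine Finset.sum_nonpos fun x hx => ?_
  rw [real_inner_smul_left]
  by_cases hxS : x ∈ S
  · exact mul_nonpos_of_nonneg_of_nonpos (Nat.cast_nonneg _)
      (hacute x hx (ne_of_mem_of_not_mem hxS hβS))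
  · simp [hcd x hx, hxS]

end Base

theorem sum_of_complementary_positive_roots_is_dominant_general
    {E : Type*} [NormedAddCommGroup E] [InnerProductSpace ℝ E]
    [DecidableEq E]
    (Φ : Set E)
    (hred : ∀ β ∈ Φ, ∀ t : ℝ, t • β ∈ Φ → t = 1 ∨ t = -1)
    (hrefl : ∀ β ∈ Φ, ∀ γ ∈ Φ, γ - (2 * ⟪γ, β⟫ / ⟪β, β⟫) • β ∈ Φ)
    (hcrys : ∀ β ∈ Φ, ∀ γ ∈ Φ, ∃ k : ℤ, 2 * ⟪γ, β⟫ / ⟪β, β⟫ = (k : ℝ))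
    (Pi : Finset E) (hPiΦ : ↑Pi ⊆ Φ)
    (hindep : LinearIndependent ℝ (fun x : (Pi : Set E) => (x : E)))
    (hbase : ∀ γ ∈ Φ, ∃ c : E → ℤ, γ = ∑ β ∈ Pi, (c β : ℝ) • β ∧
      ((∀ β ∈ Pi, 0 ≤ c β) ∨ (∀ β ∈ Pi, c β ≤ 0)))
    (S : Finset E) (hS : S ⊆ Pi)
    -- `Pos` is the set `Δ⁺` of positive roots
    (Pos : Finset E)
    (hPos : ∀ γ : E, γ ∈ Pos ↔ γ ∈ Φ ∧ ∃ c : E → ℕ, γ = ∑ β ∈ Pi, (c β : ℝ) • β)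
    -- `PosS` is the set `Δ_S⁺` of positive roots that are ℤ-linear combinations of `S`
    (PosS : Finset E)
    (hPosS : ∀ γ : E, γ ∈ PosS ↔ γ ∈ Pos ∧ ∃ c : E → ℤ, γ = ∑ β ∈ S, (c β : ℝ) • β) :
    ∀ β ∈ Pi, 0 ≤ ⟪∑ γ ∈ Pos \ PosS, γ, β⟫ := by
  intro β hβ
  have hβΦ := hPiΦ hβ
  have hβ0 : β ≠ 0 := hindep.ne_zero ⟨β, hβ⟩
  have hβPos : β ∈ Pos := (hPos β).mpr ⟨hβΦ, fun x => if x = β then 1 else 0, by simp [hβ]⟩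
  have hPos_erase := rootReflection_mem_erase hindep hβ (hred β hβΦ) (hrefl β hβΦ) hbase hPos
  rw [Finset.sum_sdiff_eq_sub fun γ hγ => ((hPosS γ).mp hγ).1, inner_sub_left,
    inner_sum_eq_inner_self_of_mapsTo_erase hβ0 hβPos hPos_erase]
  by_cases hβS : β ∈ S
  · have hβPosS : β ∈ PosS :=
      (hPosS β).mpr ⟨hβPos, fun x => if x = β then 1 else 0, by simp [hβS]⟩
    have hPosS_erase := rootReflection_mem_erase_of_int_coeffs hβS
      (fun γ hγ => hcrys β hβΦ γ ((hPos γ).mp ((hPosS γ).mp hγ).1).1) hPos_erase hPosS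
    rw [inner_sum_eq_inner_self_of_mapsTo_erase hβ0 hβPosS hPosS_erase, sub_self]
  · have hacute : ∀ α ∈ Pi, α ≠ β → ⟪α, β⟫ ≤ 0 := fun α hα hαβ =>
      inner_nonpos_of_ne hindep hα hβ hαβ (hbase _ (hrefl β hβΦ α (hPiΦ hα)))
    have hPosS_inner : ⟪∑ γ ∈ PosS, γ, β⟫ ≤ 0 := by
      rw [sum_inner]
      refine Finset.sum_nonpos fun γ hγ => ?_
      obtain ⟨hγPos, d, hd⟩ := (hPosS γ).mp hγ
      obtain ⟨-, c, hc⟩ := (hPos γ).mp hγPos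
      exact inner_nonpos_of_notMem hindep hS hacute hβS hc hd
    linarith [real_inner_self_nonneg (x := β)]

/-- For a reduced crystallographic root system `Φ` with base `Pi`, a
subset `S ⊆ Pi`, the set `Pos` of positive roots and the set `PosS` of positive roots
that are ℤ-linear combinations of elements of `S`: the sum
`μ_S = Σ_{γ ∈ Pos \ PosS} γ` is dominant, i.e. `⟪μ_S, β⟫ ≥ 0` for every `β ∈ Pi`. -/
theorem sum_of_complementary_positive_roots_is_dominant
    {E : Type*} [NormedAddCommGroup E] [InnerProductSpace ℝ E] [FiniteDimensional ℝ E]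
    [DecidableEq E]
    (Φ : Set E) (hfin : Φ.Finite) (h0 : 0 ∉ Φ) (hspan : Submodule.span ℝ Φ = ⊤)
    (hred : ∀ β ∈ Φ, ∀ t : ℝ, t • β ∈ Φ → t = 1 ∨ t = -1)
    (hrefl : ∀ β ∈ Φ, ∀ γ ∈ Φ, γ - (2 * ⟪γ, β⟫ / ⟪β, β⟫) • β ∈ Φ)
    (hcrys : ∀ β ∈ Φ, ∀ γ ∈ Φ, ∃ k : ℤ, 2 * ⟪γ, β⟫ / ⟪β, β⟫ = (k : ℝ))
    (Pi : Finset E) (hPiΦ : ↑Pi ⊆ Φ)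
    (hindep : LinearIndependent ℝ (fun x : (Pi : Set E) => (x : E)))
    (hbase : ∀ γ ∈ Φ, ∃ c : E → ℤ, γ = ∑ β ∈ Pi, (c β : ℝ) • β ∧
      ((∀ β ∈ Pi, 0 ≤ c β) ∨ (∀ β ∈ Pi, c β ≤ 0)))
    (S : Finset E) (hS : S ⊆ Pi)
    -- `Pos` is the set `Δ⁺` of positive roots
    (Pos : Finset E)
    (hPos : ∀ γ : E, γ ∈ Pos ↔ γ ∈ Φ ∧ ∃ c : E → ℕ, γ = ∑ β ∈ Pi, (c β : ℝ) • β)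
    -- `PosS` is the set `Δ_S⁺` of positive roots that are ℤ-linear combinations of `S`
    (PosS : Finset E)
    (hPosS : ∀ γ : E, γ ∈ PosS ↔ γ ∈ Pos ∧ ∃ c : E → ℤ, γ = ∑ β ∈ S, (c β : ℝ) • β) :
    ∀ β ∈ Pi, 0 ≤ ⟪∑ γ ∈ Pos \ PosS, γ, β⟫ :=
  sum_of_complementary_positive_roots_is_dominant_general Φ hred hrefl hcrys Pi hPiΦ hindep hbase S
    hS Pos hPos PosS hPosS
end
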